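/- arXiv:2101.01792 — 4 statements merged into one kernel-verified Lean document; each statement's English description precedes it below -/
import Mathlib

section
/- Let a ∈ Σ_n with normalized reweighting w^W(a,I)_k = a_{i_k}/∑_{j∈I} a_j for I = (i_1,…,i_m) without repeated indices (and uniform weights if the denominator vanishes), and let P_a^W(I) = (1/m)·((n-m)!/(n-1)!)·∑_{j∈I} a_j. Then E_{I∼P_a^W}[ Q_I^T w^W(a,I) ] = a, where Q_I is the m×n matrix with (Q_I)_{k,j} = δ_{i_k, j}. In words, the admissibility condition holds for the pair (w^W, P^W). -/
/-!
For an injective tuple `I`, the factor `∑_{l} a (I l)` of `P_a^W(I)` cancels the denominator of the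
reweighting, so `I` contributes the constant prefactor times `a j` when `j` occurs in `I` and nothing
otherwise (if that mass vanishes, so does `a j`). The number of injective `m`-tuples in `Fin n` hitting
`j` is `m · (n-1)!/(n-m)!`, the reciprocal of the prefactor.
-/

open Finset

theorem Nat.succ_descFactorial_eq_add (n k : ℕ) :
    (n + 1).descFactorial k = n.descFactorial k + k * n.descFactorial (k - 1) := by
  cases k with
  | zero => simp
  | succ k =>
    rw [Nat.succ_descFactorial_succ, Nat.descFactorial_succ, Nat.add_sub_cancel]
    rcases le_or_gt k n with hkn | hnk
    · rw [← add_mul]; congr 1; omega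
    · simp [Nat.descFactorial_eq_zero_iff_lt.mpr hnk]

def injectiveAvoidingEquivEmbedding {α β : Type*} (b : β) :
    {f : α → β // Function.Injective f ∧ b ∉ Set.range f} ≃ (α ↪ {x : β // x ≠ b}) where
  toFun f := ⟨fun k => ⟨f.1 k, fun h => f.2.2 ⟨k, h⟩⟩,
    fun _ _ h => f.2.1 (congrArg Subtype.val h)⟩
  invFun g := ⟨fun k => g k, fun _ _ h => g.injective (Subtype.ext h),
    fun ⟨k, h⟩ => (g k).2 h⟩
  left_inv _ := rfl
  right_inv _ := rfl

section Counting

variable {α β : Type*} [Fintype α] [Fintype β]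

theorem card_injective_not_mem_range (b : β) :
    Nat.card {f : α → β // Function.Injective f ∧ b ∉ Set.range f} =
      (Fintype.card β - 1).descFactorial (Fintype.card α) := by
  classical
  rw [Nat.card_eq_fintype_card, Fintype.card_congr (injectiveAvoidingEquivEmbedding b),
    Fintype.card_embedding_eq, Fintype.card_subtype_compl, Fintype.card_subtype_eq]

theorem card_injective_mem_range (b : β) :
    Nat.card {f : α → β // Function.Injective f ∧ b ∈ Set.range f} =
      Fintype.card α * (Fintype.card β - 1).descFactorial (Fintype.card α - 1) := by
  classical
  have hsplit : Nat.card {f : α → β // Function.Injective f ∧ b ∈ Set.range f} +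
      Nat.card {f : α → β // Function.Injective f ∧ b ∉ Set.range f} =
      (Fintype.card β).descFactorial (Fintype.card α) := by
    simp only [Nat.card_eq_fintype_card]
    rw [← Fintype.card_subtype_or_disjoint _ _ fun _ hp hq f hf => (hq f hf).2 (hp f hf).2,
      ← Fintype.card_embedding_eq,
      ← Fintype.card_congr (Equiv.subtypeInjectiveEquivEmbedding α β)]
    exact Fintype.card_congr (Equiv.subtypeEquivRight fun f => by tauto)
  obtain ⟨N, hN⟩ : ∃ N, Fintype.card β = N + 1 :=
    Nat.exists_eq_add_one.mpr (Fintype.card_pos_iff.mpr ⟨b⟩)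
  rw [card_injective_not_mem_range, hN, Nat.succ_descFactorial_eq_add,
    Nat.add_sub_cancel] at hsplit
  rw [hN, Nat.add_sub_cancel]
  omega

end Counting

theorem one_div_mul_factorial_div_mul_descFactorial {m n : ℕ} (hm : 1 ≤ m) (hmn : m ≤ n) :
    1 / (m : ℝ) * ((n - m).factorial / (n - 1).factorial) *
      (m * (n - 1).descFactorial (m - 1) : ℕ) = 1 := by
  have h := Nat.factorial_mul_descFactorial (show m - 1 ≤ n - 1 by omega)
  rw [show n - 1 - (m - 1) = n - m by omega] at h
  have hm' : (m : ℝ) ≠ 0 := by positivity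
  field_simp
  rw [← h]
  push_cast
  ring

theorem sum_mul_lift_reweight {α β : Type*} [Fintype α] [DecidableEq β] {I : α → β}
    (hI : Function.Injective I) {a : β → ℝ} (ha : ∀ j, 0 ≤ a j) (c : ℝ) (j : β) :
    (∑ l, a (I l)) * ∑ k, (if I k = j then
        (if ∑ l, a (I l) = 0 then c else a (I k) / ∑ l, a (I l)) else 0) =
      (Set.range I).indicator a j := by
  by_cases hj : j ∈ Set.range I
  · obtain ⟨k₀, rfl⟩ := hj
    rw [Set.indicator_of_mem (Set.mem_range_self k₀),
      Fintype.sum_eq_single k₀ fun k hk => if_neg (hI.ne hk), if_pos rfl]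
    split_ifs with hS
    · rw [hS, zero_mul,
        (Finset.sum_eq_zero_iff_of_nonneg fun l _ => ha (I l)).mp hS k₀ (mem_univ _)]
    · field_simp
  · rw [Set.indicator_of_notMem hj, Finset.sum_eq_zero fun k _ => if_neg fun h => hj ⟨k, h⟩,
      mul_zero]

theorem stmt4_general (n m : ℕ) (hm : 1 ≤ m) (hmn : m ≤ n) (a : Fin n → ℝ)
    (ha : ∀ j, 0 ≤ a j) (j : Fin n) :
    ∑ I : Fin m → Fin n,
      (if Function.Injective I then
        (1 / (m : ℝ)) * ((Nat.factorial (n - m) : ℝ) / (Nat.factorial (n - 1))) *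
          ∑ l, a (I l)
      else 0) *
      (∑ k, if I k = j then
          (if (∑ l, a (I l)) = 0 then (1 : ℝ) / m else a (I k) / ∑ l, a (I l))
        else 0) = a j := by
  classical
  set C : ℝ := (1 / (m : ℝ)) * ((Nat.factorial (n - m) : ℝ) / (Nat.factorial (n - 1)))
  have hterm : ∀ I : Fin m → Fin n,
      (if Function.Injective I then C * ∑ l, a (I l) else 0) *
        (∑ k, if I k = j then
          (if (∑ l, a (I l)) = 0 then (1 : ℝ) / m else a (I k) / ∑ l, a (I l)) else 0) =
      if Function.Injective I ∧ j ∈ Set.range I then C * a j else 0 := by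
    intro I
    by_cases hI : Function.Injective I
    · rw [if_pos hI, mul_assoc, sum_mul_lift_reweight hI ha]
      by_cases hj : j ∈ Set.range I <;> simp [hI, hj]
    · simp [hI]
  rw [Finset.sum_congr rfl fun I _ => hterm I, Finset.sum_ite, Finset.sum_const_zero, add_zero,
    Finset.sum_const, nsmul_eq_mul, ← Fintype.card_subtype, ← Nat.card_eq_fintype_card,
    card_injective_mem_range, Fintype.card_fin, Fintype.card_fin, ← mul_assoc, mul_comm _ C,
    one_div_mul_factorial_div_mul_descFactorial hm hmn, one_mul]

/-- Admissibility of the pair `(w^W, P^W)`: with the normalized reweighting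
`w^W(a,I)_k = a_{i_k}/∑_{j∈I} a_j` (uniform `1/m` when the denominator vanishes)
and the without-replacement law `P_a^W(I) = (1/m)·((n-m)!/(n-1)!)·∑_{j∈I} a_j`
on `m`-tuples with pairwise distinct entries,
`E_{I∼P_a^W}[ Q_I^T w^W(a,I) ] = a` coordinatewise. -/
theorem stmt4 (n m : ℕ) (hm : 1 ≤ m) (hmn : m ≤ n) (a : Fin n → ℝ)
    (ha : ∀ j, 0 ≤ a j) (hsum : ∑ j, a j = 1) (j : Fin n) :
    ∑ I : Fin m → Fin n,
      (if Function.Injective I then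
        (1 / (m : ℝ)) * ((Nat.factorial (n - m) : ℝ) / (Nat.factorial (n - 1))) *
          ∑ l, a (I l)
      else 0) *
      (∑ k, if I k = j then
          (if (∑ l, a (I l)) = 0 then (1 : ℝ) / m else a (I k) / ∑ l, a (I l))
        else 0) = a j :=
  stmt4_general n m hm hmn a ha j
end

section
/- With the setting of the previous statement, if additionally each Π_{I,J} is an optimal coupling for the cost submatrix C_{I,J} (so that ⟨Π_{I,J}, C_{I,J}⟩ equals the optimal transport cost between w₁(a,I) and w₂(b,J)), then the minibatch OT loss satisfies h̄(a,b) := E_{I,J}⟨Π_{I,J}, C_{I,J}⟩ = ⟨Π̄, C⟩ ≥ W_C(a,b), where W_C(a,b) = min_{Π ∈ U(a,b)} ⟨Π, C⟩ is the optimal transport cost between a and b for cost matrix C. In particular, the minibatch OT loss is an upper bound of the exact OT cost. -/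
/-!
Lifting a coupling of the minibatch weights `w₁(a,I)`, `w₂(b,J)` along `Q_I`, `Q_J` gives a
coupling of `Q_Iᵀ w₁(a,I)` and `Q_Jᵀ w₂(b,J)`, and a product-weighted mixture of couplings
couples the averaged marginals. So `Π̄` couples the averages of the lifted weights, which are `a`
and `b` by admissibility. Since `⟨Q_Iᵀ Π Q_J, C⟩ = ⟨Π, C_{I,J}⟩`, linearity gives
`h̄(a,b) = ⟨Π̄, C⟩`, and a coupling bounds the infimum `W_C(a,b)` from above.
-/

open Finset

section Transport

variable {α β : Type*} [Fintype α] [Fintype β]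

def transportCost (Γ C : α → β → ℝ) : ℝ :=
  ∑ i, ∑ j, Γ i j * C i j

def IsCoupling (a : α → ℝ) (b : β → ℝ) (Γ : α → β → ℝ) : Prop :=
  (∀ i j, 0 ≤ Γ i j) ∧ (∀ i, ∑ j, Γ i j = a i) ∧ (∀ j, ∑ i, Γ i j = b j)

theorem sInf_transportCost_le {a : α → ℝ} {b : β → ℝ} {C Γ : α → β → ℝ}
    (hC : ∀ i j, 0 ≤ C i j) (hΓ : IsCoupling a b Γ) :
    sInf {v : ℝ | ∃ Γ' : α → β → ℝ, (∀ i j, 0 ≤ Γ' i j) ∧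
        (∀ i, ∑ j, Γ' i j = a i) ∧ (∀ j, ∑ i, Γ' i j = b j) ∧ v = transportCost Γ' C} ≤
      transportCost Γ C := by
  refine csInf_le ⟨0, ?_⟩ ⟨Γ, hΓ.1, hΓ.2.1, hΓ.2.2, rfl⟩
  rintro _ ⟨Γ', hΓ', -, -, rfl⟩
  exact sum_nonneg fun i _ => sum_nonneg fun j _ => mul_nonneg (hΓ' i j) (hC i j)

variable {ι ι' : Type*} [Fintype ι] [Fintype ι']

theorem transportCost_mixture (p : ι → ℝ) (q : ι' → ℝ) (Γ : ι → ι' → α → β → ℝ)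
    (C : α → β → ℝ) :
    transportCost (fun i j => ∑ I, ∑ J, p I * q J * Γ I J i j) C =
      ∑ I, ∑ J, p I * q J * transportCost (Γ I J) C := by
  simp only [transportCost, sum_mul, mul_sum, mul_assoc]
  rw [sum_comm_cycle]
  simp_rw [sum_comm_cycle (s := univ (α := α))]

theorem IsCoupling.mixture {p : ι → ℝ} {q : ι' → ℝ} {r : ι → α → ℝ} {c : ι' → β → ℝ}
    {Γ : ι → ι' → α → β → ℝ} (hp : ∀ I, 0 ≤ p I) (hp1 : ∑ I, p I = 1)
    (hq : ∀ J, 0 ≤ q J) (hq1 : ∑ J, q J = 1) (hΓ : ∀ I J, IsCoupling (r I) (c J) (Γ I J)) :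
    IsCoupling (fun i => ∑ I, p I * r I i) (fun j => ∑ J, q J * c J j)
      (fun i j => ∑ I, ∑ J, p I * q J * Γ I J i j) := by
  refine ⟨fun i j => ?_, fun i => ?_, fun j => ?_⟩
  · exact sum_nonneg fun I _ => sum_nonneg fun J _ =>
      mul_nonneg (mul_nonneg (hp I) (hq J)) ((hΓ I J).1 i j)
  · rw [← sum_comm_cycle]
    simp only [← mul_sum, (hΓ _ _).2.1, ← sum_mul, hq1, mul_one]
  · rw [← sum_comm_cycle, sum_comm]
    simp only [← mul_sum, (hΓ _ _).2.2, mul_comm (p _), mul_assoc, ← sum_mul, hp1, mul_one]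

end Transport

section Minibatch

variable {α β κ κ' : Type*} [Fintype α] [Fintype β] [Fintype κ] [Fintype κ']
  [DecidableEq α] [DecidableEq β]

/-- The plan `Q_Iᵀ Γ Q_J` on `α × β` induced by a plan `Γ` on minibatch positions. -/
def liftPlan (I : κ → α) (J : κ' → β) (Γ : κ → κ' → ℝ) (i : α) (j : β) : ℝ :=
  ∑ k, ∑ l, (if I k = i then (1 : ℝ) else 0) * (if J l = j then (1 : ℝ) else 0) * Γ k l

theorem transportCost_liftPlan (I : κ → α) (J : κ' → β) (Γ : κ → κ' → ℝ) (C : α → β → ℝ) :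
    transportCost (liftPlan I J Γ) C = ∑ k, ∑ l, Γ k l * C (I k) (J l) := by
  simp only [transportCost, liftPlan, sum_mul]
  rw [sum_comm_cycle]
  simp_rw [sum_comm_cycle (s := univ (α := α))]
  simp [mul_comm]

theorem isCoupling_liftPlan {w : κ → ℝ} {v : κ' → ℝ} {Γ : κ → κ' → ℝ} (hΓ : IsCoupling w v Γ)
    (I : κ → α) (J : κ' → β) :
    IsCoupling (fun i => ∑ k, if I k = i then w k else 0)
      (fun j => ∑ l, if J l = j then v l else 0) (liftPlan I J Γ) := by
  refine ⟨fun i j => ?_, fun i => ?_, fun j => ?_⟩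
  · exact sum_nonneg fun k _ => sum_nonneg fun l _ =>
      mul_nonneg (mul_nonneg (by positivity) (by positivity)) (hΓ.1 k l)
  · simp only [liftPlan, ← hΓ.2.1]
    rw [← sum_comm_cycle]
    simp [ite_mul]
  · simp only [liftPlan, ← hΓ.2.2]
    rw [← sum_comm_cycle, sum_comm]
    simp [ite_mul]

end Minibatch

theorem stmt8_general (n m : ℕ)
    (a b : Fin n → ℝ) (ha0 : ∀ i, 0 ≤ a i) (hasum : ∑ i, a i = 1)
    (hb0 : ∀ i, 0 ≤ b i) (hbsum : ∑ i, b i = 1)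
    (C : Fin n → Fin n → ℝ) (hC : ∀ i j, 0 ≤ C i j)
    (w1 w2 : (Fin n → ℝ) → (Fin m → Fin n) → Fin m → ℝ)
    (P1 P2 : (Fin n → ℝ) → (Fin m → Fin n) → ℝ)
    (hP1prob : ∀ c : Fin n → ℝ, (∀ i, 0 ≤ c i) → (∑ i, c i = 1) →
      (∀ I, 0 ≤ P1 c I) ∧ ∑ I : Fin m → Fin n, P1 c I = 1)
    (hP2prob : ∀ c : Fin n → ℝ, (∀ i, 0 ≤ c i) → (∑ i, c i = 1) →
      (∀ J, 0 ≤ P2 c J) ∧ ∑ J : Fin m → Fin n, P2 c J = 1)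
    (hadm1 : ∀ c : Fin n → ℝ, (∀ i, 0 ≤ c i) → (∑ i, c i = 1) →
      ∀ j, ∑ I : Fin m → Fin n, P1 c I * (∑ k, if I k = j then w1 c I k else 0) = c j)
    (hadm2 : ∀ c : Fin n → ℝ, (∀ i, 0 ≤ c i) → (∑ i, c i = 1) →
      ∀ j, ∑ J : Fin m → Fin n, P2 c J * (∑ l, if J l = j then w2 c J l else 0) = c j)
    (Pi : (Fin m → Fin n) → (Fin m → Fin n) → Fin m → Fin m → ℝ)
    (hPi0 : ∀ I J k l, 0 ≤ Pi I J k l)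
    (hrow : ∀ I J k, ∑ l, Pi I J k l = w1 a I k)
    (hcol : ∀ I J l, ∑ k, Pi I J k l = w2 b J l)
    (Pibar : Fin n → Fin n → ℝ)
    (hPibar : ∀ i j : Fin n, Pibar i j =
      ∑ I : Fin m → Fin n, ∑ J : Fin m → Fin n,
        P1 a I * P2 b J *
          ∑ k, ∑ l,
            (if I k = i then (1 : ℝ) else 0) * (if J l = j then (1 : ℝ) else 0) *
              Pi I J k l)
    (hbar : ℝ)
    (hhbar : hbar =
      ∑ I : Fin m → Fin n, ∑ J : Fin m → Fin n,
        P1 a I * P2 b J * ∑ k, ∑ l, Pi I J k l * C (I k) (J l)) :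
    hbar = ∑ i, ∑ j, Pibar i j * C i j ∧
    sInf {v : ℝ | ∃ Γ : Fin n → Fin n → ℝ, (∀ i j, 0 ≤ Γ i j) ∧
        (∀ i, ∑ j, Γ i j = a i) ∧ (∀ j, ∑ i, Γ i j = b j) ∧
        v = ∑ i, ∑ j, Γ i j * C i j} ≤ hbar := by
  obtain ⟨hP1, hP1sum⟩ := hP1prob a ha0 hasum
  obtain ⟨hP2, hP2sum⟩ := hP2prob b hb0 hbsum
  have hPibar_eq : Pibar = fun i j => ∑ I, ∑ J, P1 a I * P2 b J * liftPlan I J (Pi I J) i j :=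
    funext₂ hPibar
  have hcost : hbar = transportCost Pibar C := by
    simp only [hhbar, hPibar_eq, transportCost_mixture, transportCost_liftPlan]
  have hcoupling : IsCoupling a b Pibar := by
    have h := IsCoupling.mixture hP1 hP1sum hP2 hP2sum fun I J =>
      isCoupling_liftPlan (Γ := Pi I J) ⟨hPi0 I J, hrow I J, hcol I J⟩ I J
    rwa [funext (hadm1 a ha0 hasum), funext (hadm2 b hb0 hbsum), ← hPibar_eq] at h
  exact ⟨hcost, hcost ▸ sInf_transportCost_le hC hcoupling⟩

/-- With admissible `(w₁,P¹)`, `(w₂,P²)` and optimal minibatch couplings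
`Π_{I,J}` for the cost submatrices `C_{I,J}`, the minibatch OT loss
`h̄(a,b) = E_{I,J}⟨Π_{I,J}, C_{I,J}⟩` equals `⟨Π̄, C⟩` and upper bounds the
exact OT cost `W_C(a,b) = inf_{Π∈U(a,b)} ⟨Π,C⟩` between `a` and `b`. -/
theorem stmt8 (n m : ℕ) (hm : 1 ≤ m)
    (a b : Fin n → ℝ) (ha0 : ∀ i, 0 ≤ a i) (hasum : ∑ i, a i = 1)
    (hb0 : ∀ i, 0 ≤ b i) (hbsum : ∑ i, b i = 1)
    (C : Fin n → Fin n → ℝ) (hC : ∀ i j, 0 ≤ C i j)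
    (w1 w2 : (Fin n → ℝ) → (Fin m → Fin n) → Fin m → ℝ)
    (P1 P2 : (Fin n → ℝ) → (Fin m → Fin n) → ℝ)
    (hP1prob : ∀ c : Fin n → ℝ, (∀ i, 0 ≤ c i) → (∑ i, c i = 1) →
      (∀ I, 0 ≤ P1 c I) ∧ ∑ I : Fin m → Fin n, P1 c I = 1)
    (hP2prob : ∀ c : Fin n → ℝ, (∀ i, 0 ≤ c i) → (∑ i, c i = 1) →
      (∀ J, 0 ≤ P2 c J) ∧ ∑ J : Fin m → Fin n, P2 c J = 1)
    (hadm1 : ∀ c : Fin n → ℝ, (∀ i, 0 ≤ c i) → (∑ i, c i = 1) →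
      ∀ j, ∑ I : Fin m → Fin n, P1 c I * (∑ k, if I k = j then w1 c I k else 0) = c j)
    (hadm2 : ∀ c : Fin n → ℝ, (∀ i, 0 ≤ c i) → (∑ i, c i = 1) →
      ∀ j, ∑ J : Fin m → Fin n, P2 c J * (∑ l, if J l = j then w2 c J l else 0) = c j)
    (Pi : (Fin m → Fin n) → (Fin m → Fin n) → Fin m → Fin m → ℝ)
    (hPi0 : ∀ I J k l, 0 ≤ Pi I J k l)
    (hrow : ∀ I J k, ∑ l, Pi I J k l = w1 a I k)
    (hcol : ∀ I J l, ∑ k, Pi I J k l = w2 b J l)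
    (hopt : ∀ (I J : Fin m → Fin n) (Γ : Fin m → Fin m → ℝ),
      (∀ k l, 0 ≤ Γ k l) → (∀ k, ∑ l, Γ k l = w1 a I k) → (∀ l, ∑ k, Γ k l = w2 b J l) →
      ∑ k, ∑ l, Pi I J k l * C (I k) (J l) ≤ ∑ k, ∑ l, Γ k l * C (I k) (J l))
    (Pibar : Fin n → Fin n → ℝ)
    (hPibar : ∀ i j : Fin n, Pibar i j =
      ∑ I : Fin m → Fin n, ∑ J : Fin m → Fin n,
        P1 a I * P2 b J *
          ∑ k, ∑ l,
            (if I k = i then (1 : ℝ) else 0) * (if J l = j then (1 : ℝ) else 0) *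
              Pi I J k l)
    (hbar : ℝ)
    (hhbar : hbar =
      ∑ I : Fin m → Fin n, ∑ J : Fin m → Fin n,
        P1 a I * P2 b J * ∑ k, ∑ l, Pi I J k l * C (I k) (J l)) :
    hbar = ∑ i, ∑ j, Pibar i j * C i j ∧
    sInf {v : ℝ | ∃ Γ : Fin n → Fin n → ℝ, (∀ i j, 0 ≤ Γ i j) ∧
        (∀ i, ∑ j, Γ i j = a i) ∧ (∀ j, ∑ i, Γ i j = b j) ∧
        v = ∑ i, ∑ j, Γ i j * C i j} ≤ hbar :=
  stmt8_general n m a b ha0 hasum hb0 hbsum C hC w1 w2 P1 P2 hP1prob hP2prob hadm1 hadm2 Pi hPi0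
    hrow hcol Pibar hPibar hbar hhbar
end

section
/- Let n ≥ 3 and let x₁, x₂, x₃ ∈ ℝ^d be pairwise distinct points among a dataset, with uniform weights. Then for 1 ≤ m < n the minibatch OT loss h̄(u,u) between a distribution and itself is strictly positive: there exist minibatches I₁ = (i₁,i₂), I₂ = (i₁,i₃) with W(w(u,I₁), w(u,I₂), C(X(I₁),X(I₂))) > 0 because x₂ ≠ x₃, hence h̄(u,u) > 0. In particular the minibatch OT loss is not a distance (it fails the separation axiom d(μ,μ)=0). -/
/-!
Take an injective minibatch `I` containing `i₂` but not `i₃` (possible since `m < n`), and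
let `J` be `I` with `i₂` replaced by `i₃`. Testing the Kantorovich dual with the 1-Lipschitz
potential `dist · (X i₂)` bounds the transport cost between the two minibatches below by
`dist (X i₃) (X i₂) / m > 0`. Every other term of `h̄(u,u)` is nonnegative, so the sum is
positive.
-/

open Finset

/-- The discrete optimal transport cost between probability vectors `a, b ∈ Σ_m`
for a cost matrix `C`, as an infimum over couplings. -/
noncomputable def OTcost {m : ℕ} (a b : Fin m → ℝ) (C : Fin m → Fin m → ℝ) : ℝ :=
  sInf {v : ℝ | ∃ Γ : Fin m → Fin m → ℝ, (∀ k l, 0 ≤ Γ k l) ∧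
    (∀ k, ∑ l, Γ k l = a k) ∧ (∀ l, ∑ k, Γ k l = b l) ∧
    v = ∑ k, ∑ l, Γ k l * C k l}

lemma OTcost_nonneg {m : ℕ} (a b : Fin m → ℝ) {C : Fin m → Fin m → ℝ}
    (hC : ∀ k l, 0 ≤ C k l) : 0 ≤ OTcost a b C := by
  apply Real.sInf_nonneg
  rintro v ⟨Γ, hΓ, -, -, rfl⟩
  exact sum_nonneg fun k _ => sum_nonneg fun l _ => mul_nonneg (hΓ k l) (hC k l)

/-- Weak Kantorovich duality. -/
lemma sum_mul_sub_sum_mul_le_OTcost {m : ℕ} {a b : Fin m → ℝ} {C : Fin m → Fin m → ℝ}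
    (ha : ∀ k, 0 ≤ a k) (hb : ∀ l, 0 ≤ b l) (ha₁ : ∑ k, a k = 1) (hb₁ : ∑ l, b l = 1)
    {φ ψ : Fin m → ℝ} (hφψ : ∀ k l, ψ l - φ k ≤ C k l) :
    ∑ l, b l * ψ l - ∑ k, a k * φ k ≤ OTcost a b C := by
  apply le_csInf
  · refine ⟨_, fun k l => a k * b l, fun k l => mul_nonneg (ha k) (hb l), fun k => ?_,
      fun l => ?_, rfl⟩
    · rw [← mul_sum, hb₁, mul_one]
    · rw [← sum_mul, ha₁, one_mul]
  · rintro v ⟨Γ, hΓ, hrow, hcol, rfl⟩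
    have hψ : ∑ l, b l * ψ l = ∑ k, ∑ l, Γ k l * ψ l := by
      rw [sum_comm]; simp only [← sum_mul, hcol]
    have hφ : ∑ k, a k * φ k = ∑ k, ∑ l, Γ k l * φ k := by
      simp only [← sum_mul, hrow]
    rw [hψ, hφ, ← sum_sub_distrib]
    refine sum_le_sum fun k _ => ?_
    rw [← sum_sub_distrib]
    exact sum_le_sum fun l _ => by
      rw [← mul_sub]
      exact mul_le_mul_of_nonneg_left (hφψ k l) (hΓ k l)

lemma sum_uniform {m : ℕ} [NeZero m] : ∑ _k : Fin m, (1 : ℝ) / m = 1 := by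
  simp [NeZero.ne m]

lemma OTcost_uniform_pos_of_eq_of_ne {E : Type*} [MetricSpace E] {m : ℕ} {x y : Fin m → E}
    {k : Fin m} (hxy : ∀ l, l ≠ k → y l = x l) (hk : y k ≠ x k) :
    0 < OTcost (fun _ => (1 : ℝ) / m) (fun _ => (1 : ℝ) / m) (fun i j => dist (x i) (y j)) := by
  have : NeZero m := ⟨k.pos.ne'⟩
  have hdual := sum_mul_sub_sum_mul_le_OTcost (fun _ => by positivity) (fun _ => by positivity)
    sum_uniform sum_uniform (C := fun i j => dist (x i) (y j))
    (φ := fun i => dist (x i) (x k)) (ψ := fun j => dist (y j) (x k))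
    fun i j => by linarith [dist_triangle (y j) (x i) (x k), dist_comm (x i) (y j)]
  have hgap : ∑ j, (1 : ℝ) / m * dist (y j) (x k) - ∑ i, (1 : ℝ) / m * dist (x i) (x k)
      = 1 / m * dist (y k) (x k) := by
    rw [← sum_sub_distrib, sum_eq_single k (fun l _ hl => by simp [hxy l hl]) (by simp)]
    simp
  refine lt_of_lt_of_le ?_ (hgap ▸ hdual)
  have : (0 : ℝ) < m := by exact_mod_cast k.pos
  exact mul_pos (by positivity) (dist_pos.mpr hk)

lemma exists_injective_apply_eq_notMem_range {ι α : Type*} [Fintype ι] [Fintype α]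
    [DecidableEq α] (hcard : Fintype.card ι < Fintype.card α) (i : ι) {a b : α} (hab : a ≠ b) :
    ∃ f : ι → α, Function.Injective f ∧ f i = a ∧ b ∉ Set.range f := by
  obtain ⟨g, hg⟩ :=
    Function.Embedding.exists_of_card_le_finset (α := ι) (s := univ.erase b)
    (by rw [card_erase_of_mem (mem_univ b), card_univ]; omega)
  have hgb : ∀ j, g j ≠ b := fun j => ne_of_mem_erase (hg ⟨j, rfl⟩)
  refine ⟨Equiv.swap (g i) a ∘ g, (Equiv.injective _).comp g.injective,
    Equiv.swap_apply_left _ _, ?_⟩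
  rintro ⟨j, hj⟩
  rw [Function.comp_apply, Equiv.swap_apply_eq_iff,
    Equiv.swap_apply_of_ne_of_ne (hgb i).symm hab.symm] at hj
  exact hgb j hj

/-- If a dataset with uniform weights contains three pairwise distinct points,
then for `1 ≤ m < n` the minibatch OT loss `h̄(u,u)` between the distribution
and itself (sampling without replacement, with uniform minibatch weights and
ground cost the distance) is strictly positive; in particular the minibatch OT
loss fails the separation axiom of a distance. -/
theorem stmt9 (n m d : ℕ) (hm : 1 ≤ m) (hmn : m < n)
    (X : Fin n → EuclideanSpace ℝ (Fin d))
    (hdist : ∃ i₁ i₂ i₃ : Fin n, X i₁ ≠ X i₂ ∧ X i₁ ≠ X i₃ ∧ X i₂ ≠ X i₃) :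
    0 < ∑ I : Fin m → Fin n, ∑ J : Fin m → Fin n,
        ((if Function.Injective I then (Nat.factorial (n - m) : ℝ) / (Nat.factorial n) else 0) *
          (if Function.Injective J then (Nat.factorial (n - m) : ℝ) / (Nat.factorial n) else 0)) *
          OTcost (fun _ => (1 : ℝ) / m) (fun _ => (1 : ℝ) / m)
            (fun k l => dist (X (I k)) (X (J l))) := by
  obtain ⟨-, i₂, i₃, -, -, hX⟩ := hdist
  have hi : i₂ ≠ i₃ := fun h => hX (congrArg X h)
  set k : Fin m := ⟨0, hm⟩
  obtain ⟨I, hI, hIk, hi₃⟩ :=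
    exists_injective_apply_eq_notMem_range (by simpa using hmn) k hi
  set J := Equiv.swap i₂ i₃ ∘ I
  have hJ : Function.Injective J := (Equiv.injective _).comp hI
  have hJI : ∀ l, l ≠ k → J l = I l := fun l hl =>
    Equiv.swap_apply_of_ne_of_ne (hIk ▸ hI.ne hl) fun h => hi₃ ⟨l, h⟩
  have hJk : J k = i₃ := by simp [J, hIk]
  have hOT := OTcost_uniform_pos_of_eq_of_ne (x := X ∘ I) (y := X ∘ J) (k := k)
    (fun l hl => by simp [hJI l hl]) (by simpa [hJk, hIk] using hX.symm)
  have hw : ∀ I : Fin m → Fin n, 0 ≤ if Function.Injective I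
      then (Nat.factorial (n - m) : ℝ) / (Nat.factorial n) else 0 := fun I => by
    split_ifs <;> positivity
  refine sum_pos' (fun I _ => sum_nonneg fun J _ => ?_)
    ⟨I, mem_univ I, sum_pos' (fun J _ => ?_) ⟨J, mem_univ J, ?_⟩⟩
  rotate_left 2
  · rw [if_pos hI, if_pos hJ]
    exact mul_pos (by positivity) hOT
  all_goals
    exact mul_nonneg (mul_nonneg (hw _) (hw _)) (OTcost_nonneg _ _ fun _ _ => dist_nonneg)
end

section
/- Let u ∈ Σ_n be uniform and let the 1D minibatch Wasserstein plan (sampling without replacement, minibatch size m) between two sorted 1D samples be defined via the identity coupling on each pair of sorted minibatches. Then the (j,k) entry of the averaged plan is Π̄_{j,k} = (1/m)·binom(n,m)^{-2}·∑_{i=i_min}^{i_max} binom(j-1,i-1)·binom(k-1,i-1)·binom(n-j,m-i)·binom(n-k,m-i), where i_min = max(0, m-n+j, m-n+k) and i_max = min(j,k). Moreover each row of Π̄ sums to 1/n. -/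
/-!
The sorted coupling of two `m`-subsets `I`, `J` puts mass `1/m` on `(j, k)` exactly when `j ∈ I`,
`k ∈ J` and both have the same number `p` of smaller elements in their subset. Grouping the pairs
`(I, J)` by `p`, the `(j, k)` entry is `(1/m) ∑ₚ N(j, p) N(k, p) / binom(n, m)²`, where
`N(j, p)`, the number of `m`-subsets in which `j` has exactly `p` smaller elements, is
`binom(j, p) binom(n-1-j, m-1-p)`: such a subset is `j` together with `p` elements below `j` and
`m-1-p` above it.

For the row sums: every `m`-subset has exactly one element with `p` smaller elements for each
`p < m`, so `∑ₖ N(k, p) = binom(n, m)`, while Vandermonde gives `∑ₚ N(j, p) = binom(n-1, m-1)`,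
and `n binom(n-1, m-1) = m binom(n, m)`.
-/

open Finset

namespace Finset

variable {α : Type*} [LinearOrder α]

theorem card_filter_le_eq_card_filter_lt_add_one {I : Finset α} {j : α} (hj : j ∈ I) :
    #{x ∈ I | x ≤ j} = #{x ∈ I | x < j} + 1 := by
  rw [← card_insert_of_notMem (a := j) (s := {x ∈ I | x < j}) (by simp)]
  congr 1
  ext x
  simp only [mem_filter, mem_insert, le_iff_lt_or_eq]
  grind

theorem filter_eq_map_orderEmbOfFin {m : ℕ} (I : Finset α) (h : #I = m) (P : α → Prop)
    [DecidablePred P] :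
    {x ∈ I | P x} =
      ({i | P (I.orderEmbOfFin h i)} : Finset (Fin m)).map (I.orderEmbOfFin h).toEmbedding := by
  conv_lhs => rw [← map_orderEmbOfFin_univ I h]
  rw [filter_map]
  rfl

theorem card_filter_lt_orderEmbOfFin {m : ℕ} (I : Finset α) (h : #I = m) (i : Fin m) :
    #{x ∈ I | x < I.orderEmbOfFin h i} = i := by
  simp [filter_eq_map_orderEmbOfFin I h, filter_gt_eq_Iio]

theorem card_filter_card_filter_lt_eq {I : Finset α} {p : ℕ} (hp : p < #I) :
    #{k ∈ I | #{x ∈ I | x < k} = p} = 1 := by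
  rw [filter_eq_map_orderEmbOfFin I rfl, card_map, card_eq_one]
  exact ⟨⟨p, hp⟩, by ext; simp [card_filter_lt_orderEmbOfFin, Fin.ext_iff]⟩

theorem sum_card_filter_eq_eq_sum_card_mul_card {ι κ β : Type*} [DecidableEq β]
    {s : Finset ι} {t : Finset κ} {f : ι → β} {g : κ → β} {R : Finset β}
    (hf : ∀ x ∈ s, f x ∈ R) :
    ∑ x ∈ s, #{y ∈ t | g y = f x} = ∑ r ∈ R, #{x ∈ s | f x = r} * #{y ∈ t | g y = r} := by
  rw [← sum_fiberwise_of_maps_to hf]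
  refine sum_congr rfl fun r _ => ?_
  rw [card_eq_sum_ones {x ∈ s | f x = r}, sum_mul, one_mul]
  exact sum_congr rfl fun x hx => by rw [(mem_filter.mp hx).2]

section InsertUnion

variable {A B I : Finset α} {j : α}

theorem insert_filter_lt_union_filter_gt (hj : j ∈ I) :
    insert j ({x ∈ I | x < j} ∪ {x ∈ I | j < x}) = I := by
  ext x
  simp only [mem_insert, mem_union, mem_filter]
  rcases lt_trichotomy x j with h | rfl | h <;> grind

theorem filter_lt_insert_union (hA : ∀ x ∈ A, x < j) (hB : ∀ x ∈ B, j < x) :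
    {x ∈ insert j (A ∪ B) | x < j} = A := by
  rw [filter_insert, if_neg (lt_irrefl j), filter_union, filter_true_of_mem hA,
    filter_false_of_mem fun x hx => (hB x hx).not_gt, union_empty]

theorem filter_gt_insert_union (hA : ∀ x ∈ A, x < j) (hB : ∀ x ∈ B, j < x) :
    {x ∈ insert j (A ∪ B) | j < x} = B := by
  rw [filter_insert, if_neg (lt_irrefl j), filter_union, filter_true_of_mem hB,
    filter_false_of_mem fun x hx => (hA x hx).not_gt, empty_union]

theorem card_insert_union (hA : ∀ x ∈ A, x < j) (hB : ∀ x ∈ B, j < x) :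
    #(insert j (A ∪ B)) = #A + #B + 1 := by
  have hdisj : Disjoint A B :=
    disjoint_left.mpr fun x hxA hxB => (hA x hxA).not_gt (hB x hxB)
  rw [card_insert_of_notMem, card_union_of_disjoint hdisj]
  simp only [mem_union, not_or]
  exact ⟨fun h => lt_irrefl j (hA j h), fun h => lt_irrefl j (hB j h)⟩

end InsertUnion

end Finset

section Position

variable {α : Type*} [LinearOrder α] [Fintype α]

def subsetsAtPosition (m : ℕ) (j : α) (p : ℕ) : Finset (Finset α) :=
  {I ∈ powersetCard m univ | j ∈ I ∧ #{x ∈ I | x < j} = p}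

theorem card_subsetsAtPosition [LocallyFiniteOrderBot α] [LocallyFiniteOrderTop α]
    {m p : ℕ} (hp : p < m) (j : α) :
    #(subsetsAtPosition m j p) = (#(Iio j)).choose p * (#(Ioi j)).choose (m - 1 - p) := by
  rw [← card_powersetCard, ← card_powersetCard, ← card_product]
  refine card_bij' (fun I _ => ({x ∈ I | x < j}, {x ∈ I | j < x}))
    (fun AB _ => insert j (AB.1 ∪ AB.2)) ?_ ?_ ?_ ?_
  · intro I hI
    obtain ⟨hIm, hj, hIp⟩ := by simpa [subsetsAtPosition] using hI
    have hcard : #I = #{x ∈ I | x < j} + #{x ∈ I | j < x} + 1 := by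
      conv_lhs => rw [← insert_filter_lt_union_filter_gt hj]
      exact card_insert_union (by simp) (by simp)
    simp only [mem_product, mem_powersetCard, subset_iff, mem_filter, mem_Iio, mem_Ioi]
    exact ⟨⟨fun x hx => hx.2, hIp⟩, fun x hx => hx.2, by omega⟩
  · rintro ⟨A, B⟩ hAB
    simp only [mem_product, mem_powersetCard, subset_iff, mem_Iio, mem_Ioi] at hAB
    obtain ⟨⟨hA, rfl⟩, hB, hBq⟩ := hAB
    simp only [subsetsAtPosition, mem_filter, mem_powersetCard_univ]
    exact ⟨by rw [card_insert_union hA hB]; omega, mem_insert_self _ _,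
      by rw [filter_lt_insert_union hA hB]⟩
  · intro I hI
    exact insert_filter_lt_union_filter_gt (mem_filter.mp hI).2.1
  · rintro ⟨A, B⟩ hAB
    simp only [mem_product, mem_powersetCard, subset_iff, mem_Iio, mem_Ioi] at hAB
    rw [filter_lt_insert_union hAB.1.1 hAB.2.1, filter_gt_insert_union hAB.1.1 hAB.2.1]

theorem sum_card_subsetsAtPosition {m p : ℕ} (hp : p < m) :
    ∑ k : α, #(subsetsAtPosition m k p) = (Fintype.card α).choose m := by
  calc ∑ k : α, #(subsetsAtPosition m k p)
      = ∑ J ∈ powersetCard m univ, #{k ∈ J | #{x ∈ J | x < k} = p} := by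
        refine (sum_card_bipartiteAbove_eq_sum_card_bipartiteBelow
          (r := fun k J => k ∈ J ∧ #{x ∈ J | x < k} = p)).trans (sum_congr rfl fun J _ => ?_)
        rw [bipartiteBelow, ← filter_filter, filter_mem_eq_inter, univ_inter]
    _ = ∑ J ∈ powersetCard m (univ : Finset α), 1 := sum_congr rfl fun J hJ =>
        card_filter_card_filter_lt_eq ((mem_powersetCard_univ.mp hJ).symm ▸ hp)
    _ = (Fintype.card α).choose m := by simp

theorem sum_card_filter_card_filter_le_eq_sum_card_mul_card (m : ℕ) (j k : α) :
    ∑ I ∈ powersetCard m univ,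
      #{J ∈ powersetCard m univ | j ∈ I ∧ k ∈ J ∧ #{x ∈ I | x ≤ j} = #{x ∈ J | x ≤ k}} =
    ∑ p ∈ range m, #(subsetsAtPosition m j p) * #(subsetsAtPosition m k p) := by
  set S : Finset (Finset α) := powersetCard m univ
  calc _ = ∑ I ∈ S with j ∈ I, #{J ∈ {J ∈ S | k ∈ J} | #{x ∈ J | x < k} = #{x ∈ I | x < j}} := by
        rw [sum_filter]
        refine sum_congr rfl fun I _ => ?_
        split_ifs with hj
        · rw [filter_filter]
          congr 1
          refine filter_congr fun J _ => ?_
          by_cases hk : k ∈ J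
          · simp only [hj, hk, card_filter_le_eq_card_filter_lt_add_one, true_and]
            omega
          · simp [hk]
        · simp [hj]
    _ = _ := by
        rw [sum_card_filter_eq_eq_sum_card_mul_card (R := range m)]
        · simp only [filter_filter, subsetsAtPosition, S]
        · intro I hI
          obtain ⟨hIS, hj⟩ := mem_filter.mp hI
          rw [mem_range, ← mem_powersetCard_univ.mp hIS]
          exact card_lt_card (filter_ssubset.mpr ⟨j, hj, lt_irrefl j⟩)

end Position

theorem card_subsetsAtPosition_fin {n m p : ℕ} (hp : p < m) (j : Fin n) :
    #(subsetsAtPosition m j p) = (j : ℕ).choose p * (n - 1 - j).choose (m - 1 - p) := by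
  rw [card_subsetsAtPosition hp, Fin.card_Iio, Fin.card_Ioi]

theorem sum_card_subsetsAtPosition_fin {n m : ℕ} (hm : 1 ≤ m) (j : Fin n) :
    ∑ p ∈ range m, #(subsetsAtPosition m j p) = (n - 1).choose (m - 1) := by
  have hvandermonde := Nat.add_choose_eq j (n - 1 - j) (m - 1)
  rw [Nat.add_sub_of_le (by omega), Nat.sum_antidiagonal_eq_sum_range_succ_mk,
    Nat.succ_eq_add_one, Nat.sub_add_cancel hm] at hvandermonde
  rw [hvandermonde]
  exact sum_congr rfl fun p hp => card_subsetsAtPosition_fin (mem_range.mp hp) j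

theorem sum_sum_card_subsetsAtPosition_mul_fin {n m : ℕ} (hm : 1 ≤ m) (j : Fin n) :
    ∑ k : Fin n, ∑ p ∈ range m, #(subsetsAtPosition m j p) * #(subsetsAtPosition m k p) =
      (n - 1).choose (m - 1) * n.choose m := by
  rw [sum_comm]
  simp_rw [← mul_sum]
  rw [sum_congr rfl fun p hp => by rw [sum_card_subsetsAtPosition (mem_range.mp hp)],
    ← sum_mul, sum_card_subsetsAtPosition_fin hm, Fintype.card_fin]

theorem Nat.mul_sub_one_choose_sub_one {n m : ℕ} (hm : 1 ≤ m) (hmn : m ≤ n) :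
    n * (n - 1).choose (m - 1) = n.choose m * m := by
  have h := Nat.add_one_mul_choose_eq (n - 1) (m - 1)
  rwa [Nat.sub_add_cancel (hm.trans hmn), Nat.sub_add_cancel hm] at h

/-- Closed form for the 1D minibatch Wasserstein plan with uniform weights and
sampling without replacement: averaging over all pairs of `m`-subsets of
`{0,…,n-1}` the identity (sorted) coupling with mass `1/m`, the `(j,k)` entry
of the averaged plan equals
`(1/m)·binom(n,m)⁻²·∑_p binom(j,p)·binom(k,p)·binom(n-1-j,m-1-p)·binom(n-1-k,m-1-p)`
(with `0`-indexed `j,k` and position `p`), and each row sums to `1/n`. -/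
theorem stmt16 (n m : ℕ) (hm : 1 ≤ m) (hmn : m ≤ n)
    (Pibar : Fin n → Fin n → ℝ)
    (hPibar : ∀ j k : Fin n, Pibar j k =
      ((n.choose m : ℝ))⁻¹ ^ 2 *
        ∑ I ∈ Finset.powersetCard m (Finset.univ : Finset (Fin n)),
          ∑ J ∈ Finset.powersetCard m (Finset.univ : Finset (Fin n)),
            (if j ∈ I ∧ k ∈ J ∧
                (I.filter (fun x => x ≤ j)).card = (J.filter (fun x => x ≤ k)).card
              then (1 : ℝ) / m else 0)) :
    (∀ j k : Fin n, Pibar j k =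
      (1 / (m : ℝ)) * ((n.choose m : ℝ))⁻¹ ^ 2 *
        ∑ p ∈ Finset.range m,
          ((j.val.choose p * k.val.choose p *
            (n - 1 - j.val).choose (m - 1 - p) *
            (n - 1 - k.val).choose (m - 1 - p) : ℕ) : ℝ)) ∧
    (∀ j : Fin n, ∑ k, Pibar j k = 1 / n) := by
  have hentry (j k : Fin n) : Pibar j k = 1 / (m : ℝ) * ((n.choose m : ℝ))⁻¹ ^ 2 *
      ∑ p ∈ range m, ((#(subsetsAtPosition m j p) * #(subsetsAtPosition m k p) : ℕ) : ℝ) := by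
    simp_rw [hPibar, ← mul_boole _ (1 / (m : ℝ)), ← mul_sum, sum_boole, ← Nat.cast_sum,
      sum_card_filter_card_filter_le_eq_sum_card_mul_card]
    ring
  refine ⟨fun j k => ?_, fun j => ?_⟩
  · rw [hentry]
    refine congrArg _ (sum_congr rfl fun p hp => ?_)
    rw [card_subsetsAtPosition_fin (mem_range.mp hp), card_subsetsAtPosition_fin (mem_range.mp hp)]
    congr 1
    ring
  · have hC : (n.choose m : ℝ) ≠ 0 := by exact_mod_cast (Nat.choose_pos hmn).ne'
    have hn : (n : ℝ) ≠ 0 := by norm_cast; omega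
    have hchoose : (n * (n - 1).choose (m - 1) : ℝ) = n.choose m * m := by
      exact_mod_cast Nat.mul_sub_one_choose_sub_one hm hmn
    have hrow : ∑ k, Pibar j k = 1 / (m : ℝ) * ((n.choose m : ℝ))⁻¹ ^ 2 *
        ((∑ k : Fin n, ∑ p ∈ range m,
          #(subsetsAtPosition m j p) * #(subsetsAtPosition m k p) : ℕ) : ℝ) := by
      simp only [hentry, ← mul_sum, Nat.cast_sum]
    rw [hrow, sum_sum_card_subsetsAtPosition_mul_fin hm]
    push_cast
    field_simp
    linarith
end
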